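/- Let γ > 0 and δ > 0, and set α = γ·√(coth δ) and β = γ⁻¹·√(coth δ). Then for every k ∈ ℕ₀ and every t ∈ ℝ, e^{−t²/(2α²)}·(β/√(2π cosh δ))·∫_ℝ exp(−(β²/2)·(t/cosh δ − t′)²)·(D_γψ_k)(t′) dt′ = e^{−(k+1/2)δ}·(D_γψ_k)(t). In other words, the dilated Hermite functions D_γψ_k are eigenfunctions of the time–frequency localization operator P_δ^{(γ)} with eigenvalues e^{−(k+1/2)δ}. -/

import Mathlib

/-!
Write ψ_k through Mathlib's probabilists' Hermite polynomials, `H_k(t) = 2^{k/2} He_k(√2 t)`, and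
put `σ = e^{-δ}`. After the substitution `t' = γ x'` (which reduces to `γ = 1`) and completing the
square, the operator becomes an average of `He_k` against the Gaussian of variance `1 - σ²`
centred at `√2 σ x`. Such an average maps `He_k` to the rescaled Hermite polynomial
`σ^k He_k(· / σ)`: Gaussian integration by parts, `∫ (y - m) P e = s ∫ P' e`, shows that both
sides obey the three-term recurrence of the Hermite polynomials. The leftover Gaussian and
normalising factors recombine into `e^{-x²/2}` and `e^{-δ/2}`.
-/

open Real MeasureTheory

/-- The `k`-th physicists' Hermite polynomial as a function:
`H_k(t) = e^{t²}·(−d/dt)^k (e^{−t²})`. -/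
noncomputable def physHermite (k : ℕ) (t : ℝ) : ℝ :=
  Real.exp (t ^ 2) * ((-1 : ℝ) ^ k * iteratedDeriv k (fun s : ℝ => Real.exp (-(s ^ 2))) t)

/-- The `k`-th Hermite function `ψ_k(t) = (2^k k! √π)^{−1/2} H_k(t) e^{−t²/2}`. -/
noncomputable def hermiteFun (k : ℕ) (t : ℝ) : ℝ :=
  ((2 : ℝ) ^ k * (Nat.factorial k : ℝ) * Real.sqrt π) ^ (-(1 / 2 : ℝ)) *
    physHermite k t * Real.exp (-(t ^ 2) / 2)

/-- The `L²`-normalized dilation `(D_γψ_k)(t) = γ^{−1/2} ψ_k(t/γ)`. -/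
noncomputable def dilHermite (γ : ℝ) (k : ℕ) (t : ℝ) : ℝ :=
  γ ^ (-(1 / 2 : ℝ)) * hermiteFun k (t / γ)

open Polynomial

theorem Polynomial.derivative_hermite_succ (n : ℕ) :
    derivative (hermite (n + 1)) = (n + 1 : ℤ[X]) * hermite n := by
  induction n with
  | zero => simp
  | succ n ih =>
    rw [hermite_succ (n + 1), derivative_sub, derivative_mul, derivative_X, ih]
    simp only [derivative_mul, derivative_add, derivative_natCast, derivative_one]
    push_cast
    linear_combination -(n + 1 : ℤ[X]) * hermite_succ n

theorem physHermite_eq_aeval_hermite (k : ℕ) (t : ℝ) :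
    physHermite k t = √2 ^ k * aeval (√2 * t) (hermite k) := by
  have hgauss : (fun s : ℝ => exp (-(s ^ 2))) = fun s => exp (-((√2 * s) ^ 2 / 2)) := by
    funext s
    rw [mul_pow, sq_sqrt zero_le_two]
    ring_nf
  have hscale := congrFun (iteratedDeriv_comp_const_mul (n := k)
    (f := fun y : ℝ => exp (-(y ^ 2 / 2))) (by fun_prop) √2) t
  rw [physHermite, hgauss, hscale, iteratedDeriv_eq_iterate,
    deriv_gaussian_eq_hermite_mul_gaussian, mul_pow, sq_sqrt zero_le_two]
  have hexp : exp (t ^ 2) * exp (-(2 * t ^ 2 / 2)) = 1 := by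
    rw [← exp_add]
    ring_nf
    exact exp_zero
  have hsign : ((-1 : ℝ) ^ k) ^ 2 = 1 := by rw [← pow_mul, mul_comm, pow_mul]; norm_num
  linear_combination ((-1) ^ k) ^ 2 * √2 ^ k * aeval (√2 * t) (hermite k) * hexp
    + √2 ^ k * aeval (√2 * t) (hermite k) * hsign

section GaussianPolynomial

variable {R : Type*} [CommSemiring R] [Algebra R ℝ]

theorem integrable_gaussian_mul_aeval {s : ℝ} (hs : 0 < s) (m : ℝ) (P : R[X]) :
    Integrable fun y : ℝ => exp (-(y - m) ^ 2 / (2 * s)) * aeval y P := by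
  have hb : 0 < (2 * s)⁻¹ := by positivity
  set Q : ℝ[X] := (P.map (algebraMap R ℝ)).comp (X + C m)
  have hcentered : Integrable fun y : ℝ => exp (-(2 * s)⁻¹ * y ^ 2) * aeval y Q := by
    simp_rw [aeval_eq_sum_range, Finset.mul_sum]
    refine integrable_finsetSum _ fun i _ => ?_
    have hi : (-1 : ℝ) < i := by linarith [i.cast_nonneg (α := ℝ)]
    refine ((integrable_rpow_mul_exp_neg_mul_sq hb hi).const_mul (Q.coeff i)).congr
      (ae_of_all _ fun y => ?_)
    simp only [rpow_natCast, smul_eq_mul]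
    ring
  refine (hcentered.comp_sub_right m).congr (ae_of_all _ fun y => ?_)
  simp only [Q, aeval_comp, aeval_map_algebraMap, map_add, aeval_X, aeval_C,
    Algebra.algebraMap_self_apply, sub_add_cancel]
  ring_nf

theorem integrable_gaussian_mul_sub_mul_aeval {s : ℝ} (hs : 0 < s) (m : ℝ) (P : R[X]) :
    Integrable fun y : ℝ => exp (-(y - m) ^ 2 / (2 * s)) * ((y - m) * aeval y P) :=
  (integrable_gaussian_mul_aeval hs m ((X - C m) * P.map (algebraMap R ℝ))).congr
    (ae_of_all _ fun y => by simp)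

theorem integral_gaussian_mul_sub_mul_aeval {s : ℝ} (hs : 0 < s) (m : ℝ) (P : R[X]) :
    ∫ y, exp (-(y - m) ^ 2 / (2 * s)) * ((y - m) * aeval y P) =
      s * ∫ y, exp (-(y - m) ^ 2 / (2 * s)) * aeval y (derivative P) := by
  have hderiv (y : ℝ) : HasDerivAt (fun y => exp (-(y - m) ^ 2 / (2 * s)) * aeval y P)
      (exp (-(y - m) ^ 2 / (2 * s)) * aeval y (derivative P) -
        s⁻¹ * (exp (-(y - m) ^ 2 / (2 * s)) * ((y - m) * aeval y P))) y := by
    have hexponent := (((hasDerivAt_id' y).sub_const m).fun_pow 2).fun_neg.div_const (2 * s)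
    refine (hexponent.exp.fun_mul (P.hasDerivAt_aeval y)).congr_deriv ?_
    field_simp
    ring
  have hlin := integrable_gaussian_mul_sub_mul_aeval hs m P
  have hzero := integral_eq_zero_of_hasDerivAt_of_integrable hderiv
    ((integrable_gaussian_mul_aeval hs m _).sub (hlin.const_mul _))
    (integrable_gaussian_mul_aeval hs m P)
  rw [integral_sub (integrable_gaussian_mul_aeval hs m _) (hlin.const_mul _),
    integral_const_mul, sub_eq_zero] at hzero
  rw [hzero]
  field_simp

end GaussianPolynomial

theorem integral_gaussian_sub {s : ℝ} (hs : 0 < s) (m : ℝ) :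
    ∫ y, exp (-(y - m) ^ 2 / (2 * s)) = √(2 * π * s) :=
  calc ∫ y, exp (-(y - m) ^ 2 / (2 * s)) = ∫ y, exp (-(2 * s)⁻¹ * (y - m) ^ 2) := by
        congr 1 with y
        ring_nf
    _ = √(π / (2 * s)⁻¹) := by
        rw [integral_sub_right_eq_self (fun y => exp (-(2 * s)⁻¹ * y ^ 2)) m, integral_gaussian]
    _ = √(2 * π * s) := by
        congr 1
        field_simp

theorem integral_gaussian_mul_hermite_succ {s : ℝ} (hs : 0 < s) (m : ℝ) (n : ℕ) :
    ∫ y, exp (-(y - m) ^ 2 / (2 * s)) * aeval y (hermite (n + 1)) =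
      m * (∫ y, exp (-(y - m) ^ 2 / (2 * s)) * aeval y (hermite n)) +
        (s - 1) * ∫ y, exp (-(y - m) ^ 2 / (2 * s)) * aeval y (derivative (hermite n)) := by
  have hsplit (y : ℝ) : exp (-(y - m) ^ 2 / (2 * s)) * aeval y (hermite (n + 1)) =
      exp (-(y - m) ^ 2 / (2 * s)) * ((y - m) * aeval y (hermite n)) +
        m * (exp (-(y - m) ^ 2 / (2 * s)) * aeval y (hermite n)) -
        exp (-(y - m) ^ 2 / (2 * s)) * aeval y (derivative (hermite n)) := by
    rw [hermite_succ, map_sub, map_mul, aeval_X]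
    ring
  have hlin := integrable_gaussian_mul_sub_mul_aeval hs m (hermite n)
  have hint (P : ℤ[X]) := integrable_gaussian_mul_aeval hs m P
  simp_rw [hsplit]
  rw [integral_sub (hlin.fun_add ((hint _).const_mul m)) (hint _),
    integral_add hlin ((hint _).const_mul m), integral_const_mul,
    integral_gaussian_mul_sub_mul_aeval hs]
  ring

theorem integral_gaussian_mul_hermite {σ : ℝ} (hσ : σ ≠ 0) (hσ1 : σ ^ 2 < 1) (m : ℝ) (k : ℕ) :
    ∫ y, exp (-(y - m) ^ 2 / (2 * (1 - σ ^ 2))) * aeval y (hermite k) =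
      √(2 * π * (1 - σ ^ 2)) * σ ^ k * aeval (m / σ) (hermite k) := by
  have hs : 0 < 1 - σ ^ 2 := by linarith
  have hrec := integral_gaussian_mul_hermite_succ hs m
  induction k using Nat.twoStepInduction with
  | zero => simp [integral_gaussian_sub hs]
  | one =>
    rw [hrec 0]
    simp only [hermite_zero, hermite_one, derivative_one, map_one, map_zero, aeval_X, mul_one,
      mul_zero, integral_zero, add_zero, pow_one, integral_gaussian_sub hs]
    field_simp
  | more n ih ih1 =>
    have hder (y : ℝ) :
        aeval y (derivative (hermite (n + 1))) = (n + 1) * aeval y (hermite n) := by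
      rw [derivative_hermite_succ]
      simp
    have hnext : aeval (m / σ) (hermite (n + 2)) =
        m / σ * aeval (m / σ) (hermite (n + 1)) - (n + 1) * aeval (m / σ) (hermite n) := by
      rw [hermite_succ (n + 1), map_sub, map_mul, aeval_X, hder]
    rw [hrec (n + 1)]
    simp_rw [hder, mul_left_comm _ ((n : ℝ) + 1)]
    rw [integral_const_mul, ih, ih1, hnext]
    field_simp
    ring

theorem cosh_eq_of_exp_neg (δ : ℝ) : cosh δ = (1 + exp (-δ) ^ 2) / (2 * exp (-δ)) := by
  rw [cosh_eq, exp_neg]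
  field_simp

theorem sinh_eq_of_exp_neg (δ : ℝ) : sinh δ = (1 - exp (-δ) ^ 2) / (2 * exp (-δ)) := by
  rw [sinh_eq, exp_neg]
  field_simp

theorem exp_sub_sq_mul_hermiteFun {δ : ℝ} (hδ : δ ≠ 0) (k : ℕ) (x x' : ℝ) :
    exp (-((cosh δ / sinh δ) / 2) * (x / cosh δ - x') ^ 2) * hermiteFun k x' =
      ((2 : ℝ) ^ k * (Nat.factorial k : ℝ) * √π) ^ (-(1 / 2 : ℝ)) * √2 ^ k *
        exp (-(exp (-δ) * x ^ 2) / (2 * cosh δ)) *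
        (exp (-(√2 * x' - √2 * (exp (-δ) * x)) ^ 2 / (2 * (1 - exp (-δ) ^ 2))) *
          aeval (√2 * x') (hermite k)) := by
  have hs : 1 - exp (-δ) ^ 2 ≠ 0 := by
    rw [sub_ne_zero, ne_comm, ← exp_nat_mul, Ne, exp_eq_one_iff]
    push_cast
    contrapose! hδ
    linarith
  have hexp : exp (-((cosh δ / sinh δ) / 2) * (x / cosh δ - x') ^ 2) * exp (-(x' ^ 2) / 2) =
      exp (-(exp (-δ) * x ^ 2) / (2 * cosh δ)) *
        exp (-(2 * (x' - exp (-δ) * x) ^ 2) / (2 * (1 - exp (-δ) ^ 2))) := by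
    rw [← exp_add, ← exp_add, cosh_eq_of_exp_neg, sinh_eq_of_exp_neg]
    congr 1
    field_simp
    ring
  rw [hermiteFun, physHermite_eq_aeval_hermite, ← mul_sub, mul_pow, sq_sqrt zero_le_two]
  linear_combination ((2 : ℝ) ^ k * (Nat.factorial k : ℝ) * √π) ^ (-(1 / 2 : ℝ)) * √2 ^ k *
    aeval (√2 * x') (hermite k) * hexp

theorem hermiteFun_eigen {δ : ℝ} (hδ : 0 < δ) (k : ℕ) (x : ℝ) :
    exp (-(x ^ 2) / (2 * (cosh δ / sinh δ))) * (√(cosh δ / sinh δ) / √(2 * π * cosh δ)) *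
        ∫ x', exp (-((cosh δ / sinh δ) / 2) * (x / cosh δ - x') ^ 2) * hermiteFun k x' =
      exp (-((k + 1 / 2) * δ)) * hermiteFun k x := by
  have hcosh := cosh_eq_of_exp_neg δ
  have hsinh := sinh_eq_of_exp_neg δ
  set σ := exp (-δ) with hσ
  have hσ0 : 0 < σ := exp_pos _
  have hs : 0 < 1 - σ ^ 2 := by nlinarith [exp_lt_one_iff.2 (neg_lt_zero.2 hδ)]
  have hsubst := Measure.integral_comp_mul_left
    (fun y => exp (-(y - √2 * (σ * x)) ^ 2 / (2 * (1 - σ ^ 2))) * aeval y (hermite k)) √2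
  simp_rw [exp_sub_sq_mul_hermiteFun hδ.ne', integral_const_mul]
  rw [hsubst, integral_gaussian_mul_hermite hσ0.ne' (by linarith), mul_div_assoc,
    mul_div_cancel_left₀ _ hσ0.ne', hermiteFun, physHermite_eq_aeval_hermite,
    abs_inv, abs_of_pos (by positivity), smul_eq_mul]
  have hgauss : exp (-(x ^ 2) / (2 * (cosh δ / sinh δ))) * exp (-(σ * x ^ 2) / (2 * cosh δ)) =
      exp (-(x ^ 2) / 2) := by
    rw [← exp_add, hcosh, hsinh]
    congr 1
    field_simp
    ring
  have hconst : √(cosh δ / sinh δ) / √(2 * π * cosh δ) * (√2)⁻¹ * √(2 * π * (1 - σ ^ 2)) = √σ := by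
    rw [← sqrt_div' _ (by positivity), ← sqrt_inv, ← sqrt_mul (by positivity),
      ← sqrt_mul (by positivity), hcosh, hsinh]
    congr 1
    field_simp [hs.ne']
  have heigen : exp (-((k + 1 / 2) * δ)) = σ ^ k * √σ := by
    rw [hσ, ← exp_nat_mul, ← exp_half, ← exp_add]
    ring_nf
  rw [heigen, ← hgauss]
  linear_combination exp (-(x ^ 2) / (2 * (cosh δ / sinh δ))) * exp (-(σ * x ^ 2) / (2 * cosh δ)) *
    ((2 : ℝ) ^ k * (Nat.factorial k : ℝ) * √π) ^ (-(1 / 2 : ℝ)) * √2 ^ k * σ ^ k *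
    aeval (√2 * x) (hermite k) * hconst

theorem hermite_eigenfunctions
    (γ δ : ℝ) (hγ : 0 < γ) (hδ : 0 < δ)
    (α β : ℝ)
    (hα : α = γ * Real.sqrt (Real.cosh δ / Real.sinh δ))
    (hβ : β = γ⁻¹ * Real.sqrt (Real.cosh δ / Real.sinh δ))
    (k : ℕ) (t : ℝ) :
    Real.exp (-(t ^ 2) / (2 * α ^ 2)) * (β / Real.sqrt (2 * π * Real.cosh δ)) *
        ∫ t' : ℝ, Real.exp (-(β ^ 2 / 2) * (t / Real.cosh δ - t') ^ 2) * dilHermite γ k t' =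
      Real.exp (-(((k : ℝ) + 1 / 2) * δ)) * dilHermite γ k t := by
  have hw : 0 < cosh δ / sinh δ := div_pos (cosh_pos δ) (sinh_pos_iff.2 hδ)
  have hgauss : -(t ^ 2) / (2 * α ^ 2) = -((t / γ) ^ 2) / (2 * (cosh δ / sinh δ)) := by
    rw [hα, mul_pow, sq_sqrt hw.le]
    field_simp
  have hdilate (x' : ℝ) :
      exp (-(β ^ 2 / 2) * (t / cosh δ - γ * x') ^ 2) * dilHermite γ k (γ * x') =
        γ ^ (-(1 / 2 : ℝ)) *
          (exp (-((cosh δ / sinh δ) / 2) * (t / γ / cosh δ - x') ^ 2) * hermiteFun k x') := by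
    rw [dilHermite, mul_div_cancel_left₀ _ hγ.ne', hβ, mul_pow, sq_sqrt hw.le]
    field_simp
  have hsubst : ∫ t', exp (-(β ^ 2 / 2) * (t / cosh δ - t') ^ 2) * dilHermite γ k t' =
      γ * (γ ^ (-(1 / 2 : ℝ)) *
        ∫ x', exp (-((cosh δ / sinh δ) / 2) * (t / γ / cosh δ - x') ^ 2) * hermiteFun k x') := by
    have hscale := Measure.integral_comp_mul_left
      (fun t' => exp (-(β ^ 2 / 2) * (t / cosh δ - t') ^ 2) * dilHermite γ k t') γ
    simp only [hdilate, integral_const_mul, abs_inv, abs_of_pos hγ, smul_eq_mul] at hscale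
    rw [hscale]
    field_simp
  rw [hsubst, hgauss, dilHermite, mul_left_comm (exp _) (γ ^ _),
    ← hermiteFun_eigen hδ k (t / γ), hβ]
  field_simp
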